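/- arXiv:1708.04484 — 3 statements merged into one kernel-verified Lean document; each statement's English description precedes it below -/
import Mathlib

section
/- Fix an integer b with 12 ≤ b ≤ 35. For every prime p and every odd positive integer N, one has 𝔏(p,N) > 𝔎(p,N). -/
/-!
Sending `u` to `(p, u)` embeds the solutions counted by `𝔎(p,N)` into those counted by `𝔏(p,N)`,
since `p² ≡ 0`; so it suffices to find one solution of the `𝔏`-congruence with `p ∤ x`.
With `u₅ = u₆ = 1` this asks for `x² + u₁³ + u₂³ + u₃³ + u₄³ ≡ N - 2` with all terms units.
There are at least `(p - 1)/2` nonzero squares and `(p - 1)/3` nonzero cubes mod `p`, so by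
Cauchy–Davenport this sumset is all of `ℤ/p` once `p ≥ 7`; the primes `2, 3, 5` are checked
directly, where for `p = 2` the oddness of `N` makes `N - 2 ≡ 1 = 1² + 4 · 1³`.
-/

open scoped Classical
open Finset

noncomputable section

/-- `𝔎(p,N)`: the number of tuples `(u₁,…,u₆)` with `1 ≤ uⱼ ≤ p`, `p ∤ uⱼ`, and
`u₁³ + u₂³ + u₃³ + u₄³ + u₅⁴ + u₆^b ≡ N (mod p)`. -/
def K6 (b p : ℕ) (N : ℤ) : ℕ :=
  ((Finset.Icc 1 p ×ˢ Finset.Icc 1 p ×ˢ Finset.Icc 1 p ×ˢ Finset.Icc 1 p ×ˢ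
      Finset.Icc 1 p ×ˢ Finset.Icc 1 p).filter
    (fun u : ℕ × ℕ × ℕ × ℕ × ℕ × ℕ =>
      ¬ p ∣ u.1 ∧ ¬ p ∣ u.2.1 ∧ ¬ p ∣ u.2.2.1 ∧ ¬ p ∣ u.2.2.2.1 ∧
      ¬ p ∣ u.2.2.2.2.1 ∧ ¬ p ∣ u.2.2.2.2.2 ∧
      (u.1 : ℤ) ^ 3 + (u.2.1 : ℤ) ^ 3 + (u.2.2.1 : ℤ) ^ 3 + (u.2.2.2.1 : ℤ) ^ 3 +
        (u.2.2.2.2.1 : ℤ) ^ 4 + (u.2.2.2.2.2 : ℤ) ^ b ≡ N [ZMOD (p : ℤ)])).card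

/-- `𝔏(p,N)`: the number of tuples `(x,u₁,…,u₆)` with `1 ≤ x ≤ p`, `1 ≤ uⱼ ≤ p`, `p ∤ uⱼ`,
and `x² + u₁³ + u₂³ + u₃³ + u₄³ + u₅⁴ + u₆^b ≡ N (mod p)`. -/
def L7 (b p : ℕ) (N : ℤ) : ℕ :=
  ((Finset.Icc 1 p ×ˢ Finset.Icc 1 p ×ˢ Finset.Icc 1 p ×ˢ Finset.Icc 1 p ×ˢ
      Finset.Icc 1 p ×ˢ Finset.Icc 1 p ×ˢ Finset.Icc 1 p).filter
    (fun u : ℕ × ℕ × ℕ × ℕ × ℕ × ℕ × ℕ =>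
      ¬ p ∣ u.2.1 ∧ ¬ p ∣ u.2.2.1 ∧ ¬ p ∣ u.2.2.2.1 ∧ ¬ p ∣ u.2.2.2.2.1 ∧
      ¬ p ∣ u.2.2.2.2.2.1 ∧ ¬ p ∣ u.2.2.2.2.2.2 ∧
      (u.1 : ℤ) ^ 2 + (u.2.1 : ℤ) ^ 3 + (u.2.2.1 : ℤ) ^ 3 + (u.2.2.2.1 : ℤ) ^ 3 +
        (u.2.2.2.2.1 : ℤ) ^ 3 + (u.2.2.2.2.2.1 : ℤ) ^ 4 + (u.2.2.2.2.2.2 : ℤ) ^ b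
        ≡ N [ZMOD (p : ℤ)])).card

/-- `𝔏*(p,N)`: the number of tuples `(x,u₁,…,u₆)` with `1 ≤ x ≤ p`, `1 ≤ uⱼ ≤ p`, `p ∤ x`,
`p ∤ uⱼ`, and `x² + u₁³ + u₂³ + u₃³ + u₄³ + u₅⁴ + u₆^b ≡ N (mod p)`. -/
def Lstar (b p : ℕ) (N : ℤ) : ℕ :=
  ((Finset.Icc 1 p ×ˢ Finset.Icc 1 p ×ˢ Finset.Icc 1 p ×ˢ Finset.Icc 1 p ×ˢ
      Finset.Icc 1 p ×ˢ Finset.Icc 1 p ×ˢ Finset.Icc 1 p).filter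
    (fun u : ℕ × ℕ × ℕ × ℕ × ℕ × ℕ × ℕ =>
      ¬ p ∣ u.1 ∧ ¬ p ∣ u.2.1 ∧ ¬ p ∣ u.2.2.1 ∧ ¬ p ∣ u.2.2.2.1 ∧ ¬ p ∣ u.2.2.2.2.1 ∧
      ¬ p ∣ u.2.2.2.2.2.1 ∧ ¬ p ∣ u.2.2.2.2.2.2 ∧
      (u.1 : ℤ) ^ 2 + (u.2.1 : ℤ) ^ 3 + (u.2.2.1 : ℤ) ^ 3 + (u.2.2.2.1 : ℤ) ^ 3 +
        (u.2.2.2.2.1 : ℤ) ^ 3 + (u.2.2.2.2.2.1 : ℤ) ^ 4 + (u.2.2.2.2.2.2 : ℤ) ^ b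
        ≡ N [ZMOD (p : ℤ)])).card

section PowerImages

variable {R : Type*} [CommRing R] [IsDomain R] [DecidableEq R]

lemma card_filter_pow_eq_le (s : Finset R) {k : ℕ} (hk : 0 < k) (w : R) :
    #{a ∈ s | a ^ k = w} ≤ k :=
  calc #{a ∈ s | a ^ k = w}
      ≤ #(Polynomial.nthRootsFinset k w) :=
        card_le_card fun a ha ↦
          (Polynomial.mem_nthRootsFinset hk w).2 (mem_filter.1 ha).2
    _ ≤ Multiset.card (Polynomial.nthRoots k w) := by
        rw [Polynomial.nthRootsFinset_def]; exact Multiset.toFinset_card_le _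
    _ ≤ k := Polynomial.card_nthRoots k w

lemma card_le_mul_card_image_pow (s : Finset R) {k : ℕ} (hk : 0 < k) :
    #s ≤ k * #(s.image (· ^ k)) :=
  card_le_mul_card_image s k fun w _ ↦ card_filter_pow_eq_le s hk w

end PowerImages

open Pointwise

def nonzeroPowers (p k : ℕ) [NeZero p] : Finset (ZMod p) :=
  (univ.erase 0).image (· ^ k)

section SquaresAndCubes

variable {p : ℕ} [Fact p.Prime]

lemma sub_one_le_mul_card_nonzeroPowers {k : ℕ} (hk : 0 < k) :
    p - 1 ≤ k * #(nonzeroPowers p k) := by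
  have hcard : #(univ.erase (0 : ZMod p)) = p - 1 := by
    rw [card_erase_of_mem (mem_univ _), card_univ, ZMod.card]
  exact hcard ▸ card_le_mul_card_image_pow (univ.erase (0 : ZMod p)) hk

lemma nonzeroPowers_two_add_four_cubes_eq_univ (hp : 7 ≤ p) :
    nonzeroPowers p 2 + (nonzeroPowers p 3 + nonzeroPowers p 3 + nonzeroPowers p 3 +
      nonzeroPowers p 3) = univ := by
  have hprime := (Fact.out : p.Prime)
  have hS := sub_one_le_mul_card_nonzeroPowers (p := p) two_pos
  have hC := sub_one_le_mul_card_nonzeroPowers (p := p) three_pos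
  set S := nonzeroPowers p 2
  set C := nonzeroPowers p 3
  have hSne : S.Nonempty := card_pos.1 (by omega)
  have hCne : C.Nonempty := card_pos.1 (by omega)
  have h2 := ZMod.cauchy_davenport hprime hCne hCne
  have h3 := ZMod.cauchy_davenport hprime (hCne.add hCne) hCne
  have h4 := ZMod.cauchy_davenport hprime (hCne.add hCne |>.add hCne) hCne
  have h5 := ZMod.cauchy_davenport hprime hSne (hCne.add hCne |>.add hCne |>.add hCne)
  have hle : #(S + (C + C + C + C)) ≤ p := (card_le_univ _).trans_eq (ZMod.card p)
  exact eq_univ_of_card _ (by rw [ZMod.card]; omega)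

end SquaresAndCubes

lemma exists_sq_add_four_cubes_eq {p : ℕ} (hp : p.Prime) (M : ZMod p) (hM : p = 2 → M = 1) :
    ∃ x a b c d : ZMod p, x ≠ 0 ∧ a ≠ 0 ∧ b ≠ 0 ∧ c ≠ 0 ∧ d ≠ 0 ∧
      x ^ 2 + a ^ 3 + b ^ 3 + c ^ 3 + d ^ 3 = M := by
  by_cases hp7 : 7 ≤ p
  · have := Fact.mk hp
    have hMmem := nonzeroPowers_two_add_four_cubes_eq_univ hp7 ▸ mem_univ M
    simp only [mem_add, nonzeroPowers, mem_image, mem_erase, mem_univ, and_true] at hMmem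
    obtain ⟨_, ⟨x, hx, rfl⟩, _, ⟨_, ⟨_, ⟨_, ⟨a, ha, rfl⟩, _, ⟨b, hb, rfl⟩, rfl⟩,
      _, ⟨c, hc, rfl⟩, rfl⟩, _, ⟨d, hd, rfl⟩, rfl⟩, hsum⟩ := hMmem
    exact ⟨x, a, b, c, d, hx, ha, hb, hc, hd, by rw [← hsum]; ring⟩
  · have := hp.two_le
    interval_cases p
    · rw [hM rfl]; decide
    · revert M; decide
    · norm_num at hp
    · revert M; decide
    · norm_num at hp

lemma ZMod.val_mem_Icc_and_not_dvd {p : ℕ} [NeZero p] {z : ZMod p} (hz : z ≠ 0) :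
    z.val ∈ Icc 1 p ∧ ¬ p ∣ z.val := by
  have hpos : 0 < z.val := ZMod.val_pos.2 hz
  have hlt : z.val < p := ZMod.val_lt z
  exact ⟨mem_Icc.2 ⟨hpos, hlt.le⟩, fun h ↦ hpos.ne' (Nat.eq_zero_of_dvd_of_lt h hlt)⟩

lemma K6_lt_L7_of_exists {b p : ℕ} (hp : p.Prime) {N : ℤ}
    (h : ∃ x a c d e f g : ZMod p, x ≠ 0 ∧ a ≠ 0 ∧ c ≠ 0 ∧ d ≠ 0 ∧ e ≠ 0 ∧ f ≠ 0 ∧ g ≠ 0 ∧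
      x ^ 2 + a ^ 3 + c ^ 3 + d ^ 3 + e ^ 3 + f ^ 4 + g ^ b = N) :
    K6 b p N < L7 b p N := by
  have : NeZero p := ⟨hp.ne_zero⟩
  obtain ⟨x, a, c, d, e, f, g, hx, ha, hc, hd, he, hf, hg, hsum⟩ := h
  unfold K6 L7
  rw [← card_map (Function.Embedding.sectR p _)]
  refine card_lt_card ((ssubset_iff_of_subset ?_).2
    ⟨(x.val, a.val, c.val, d.val, e.val, f.val, g.val), ?_, ?_⟩)
  · intro t ht
    obtain ⟨u, hu, rfl⟩ := mem_map.1 ht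
    simp only [mem_filter, mem_product, Function.Embedding.sectR_apply] at hu ⊢
    obtain ⟨hu, h1, h2, h3, h4, h5, h6, hcong⟩ := hu
    refine ⟨⟨mem_Icc.2 ⟨hp.one_le, le_rfl⟩, hu⟩, h1, h2, h3, h4, h5, h6, ?_⟩
    rw [← ZMod.intCast_eq_intCast_iff] at hcong ⊢
    push_cast at hcong ⊢
    rw [ZMod.natCast_self, ← hcong]
    ring
  · have hv := @ZMod.val_mem_Icc_and_not_dvd p _
    simp only [mem_filter, mem_product]
    refine ⟨⟨(hv hx).1, (hv ha).1, (hv hc).1, (hv hd).1, (hv he).1, (hv hf).1, (hv hg).1⟩,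
      (hv ha).2, (hv hc).2, (hv hd).2, (hv he).2, (hv hf).2, (hv hg).2, ?_⟩
    rw [← ZMod.intCast_eq_intCast_iff]
    push_cast
    simpa only [ZMod.natCast_val, ZMod.cast_id', id] using hsum
  · simp only [mem_map, Function.Embedding.sectR_apply, Prod.mk.injEq, not_exists, not_and]
    exact fun _ _ h _ ↦ (ZMod.val_lt x).ne' h

theorem stmt9_general (b : ℕ) (p : ℕ) (hp : p.Prime)
    (N : ℤ) (hNodd : Odd N) :
    K6 b p N < L7 b p N := by
  have hM : p = 2 → (N : ZMod p) - 2 = 1 := by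
    rintro rfl
    rw [ZMod.intCast_eq_one_iff_odd.2 hNodd]
    decide
  have := Fact.mk hp
  obtain ⟨x, a, c, d, e, hx, ha, hc, hd, he, hsum⟩ := exists_sq_add_four_cubes_eq hp _ hM
  refine K6_lt_L7_of_exists hp
    ⟨x, a, c, d, e, 1, 1, hx, ha, hc, hd, he, one_ne_zero, one_ne_zero, ?_⟩
  linear_combination hsum

theorem stmt9 (b : ℕ) (hb1 : 12 ≤ b) (hb2 : b ≤ 35) (p : ℕ) (hp : p.Prime)
    (N : ℤ) (hNpos : 0 < N) (hNodd : Odd N) :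
    K6 b p N < L7 b p N :=
  stmt9_general b p hp N hNodd

end
end

section
/- Fix an integer b with 12 ≤ b ≤ 35. For every prime p and every integer N, one has 1 + A_p(p,N) = p·𝔎(p,N)/(p−1)⁶, where A_p(p,N) = B_p(p,N)/(p·φ(p)⁶) and B_p(p,N) = Σ_{1 ≤ a ≤ p−1} S₂(p, a p²)·S₃*(p,a)⁴·S₄*(p,a)·S_b*(p,a)·e(−aN/p). Consequently, when 𝔏(p,N) > 0, the ratio (1 + A_p(p,N))/(1 + A(p,N)) equals p·𝔎(p,N)/𝔏(p,N). -/
open scoped Classical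
open Finset

noncomputable section

/-- `e(x) = e^{2πix}`. -/
def eR (x : ℝ) : ℂ := Complex.exp (2 * Real.pi * x * Complex.I)

/-- `S₂(q,a) = Σ_{n=1}^{q} e(a n² / q)`. -/
def S2 (q a : ℕ) : ℂ := ∑ n ∈ Finset.Icc 1 q, eR ((a : ℝ) * (n : ℝ) ^ 2 / q)

/-- `S_k*(q,a) = Σ_{1 ≤ n ≤ q, (n,q)=1} e(a n^k / q)`. -/
def Sstar (k q a : ℕ) : ℂ :=
  ∑ n ∈ (Finset.Icc 1 q).filter (fun n => Nat.gcd n q = 1),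
    eR ((a : ℝ) * (n : ℝ) ^ k / q)

/-- `B(q,N) = Σ_{1 ≤ a ≤ q, (a,q)=1} S₂(q,a) S₃*(q,a)⁴ S₄*(q,a) S_b*(q,a) e(−aN/q)`,
for an integer `N`. -/
def B (b q : ℕ) (N : ℤ) : ℂ :=
  ∑ a ∈ (Finset.Icc 1 q).filter (fun a => Nat.gcd a q = 1),
    S2 q a * (Sstar 3 q a) ^ 4 * Sstar 4 q a * Sstar b q a *
      eR (-((a : ℝ) * (N : ℝ) / q))

/-- `A(q,N) = B(q,N)/(q φ(q)⁶)`. -/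
def A (b q : ℕ) (N : ℤ) : ℂ := B b q N / ((q : ℂ) * (q.totient : ℂ) ^ 6)

/-- `B_p(p,N) = Σ_{1 ≤ a ≤ p−1} S₂(p, a p²) S₃*(p,a)⁴ S₄*(p,a) S_b*(p,a) e(−aN/p)`. -/
def Bp (b p : ℕ) (N : ℤ) : ℂ :=
  ∑ a ∈ Finset.Icc 1 (p - 1),
    S2 p (a * p ^ 2) * (Sstar 3 p a) ^ 4 * Sstar 4 p a * Sstar b p a *
      eR (-((a : ℝ) * (N : ℝ) / p))

/-- `A_p(p,N) = B_p(p,N)/(p φ(p)⁶)`. -/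
def Ap (b p : ℕ) (N : ℤ) : ℂ := Bp b p N / ((p : ℂ) * (p.totient : ℂ) ^ 6)


/-!
Orthogonality of the additive characters `a ↦ e(a m / p)` turns the complete sum over
`1 ≤ a ≤ p` of `S₃*(p,a)⁴ S₄*(p,a) S_b*(p,a) e(−aN/p)` into `p·𝔎(p,N)`, and the same sum with
the extra factor `S₂(p,a)` into `p·𝔏(p,N)`. The term `a = p` of these complete sums is
`φ(p)⁶ = (p−1)⁶`, resp. `p (p−1)⁶`, and produces the `1` in `1 + A`. Since `S₂(p, a p²) = p`,
this gives `B_p(p,N) = p (p 𝔎 − (p−1)⁶)` and `B(p,N) = p 𝔏 − p (p−1)⁶`, whence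
`1 + A_p = p 𝔎 / (p−1)⁶` and `1 + A = 𝔏 / (p−1)⁶`.
-/

lemma eR_add (x y : ℝ) : eR (x + y) = eR x * eR y := by
  simp only [eR, ← Complex.exp_add]
  push_cast
  ring_nf

lemma eR_intCast (n : ℤ) : eR n = 1 := by
  rw [eR, ← Complex.exp_int_mul_two_pi_mul_I n]
  congr 1
  push_cast
  ring

lemma eR_natCast (n : ℕ) : eR n = 1 :=
  mod_cast eR_intCast n

lemma eR_natCast_mul (k : ℕ) (x : ℝ) : eR (k * x) = eR x ^ k := by
  rw [eR, eR, ← Complex.exp_nat_mul]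
  push_cast
  ring_nf

lemma eR_eq_one_iff {x : ℝ} : eR x = 1 ↔ ∃ n : ℤ, x = n := by
  have h2πi : 2 * (Real.pi : ℂ) * Complex.I ≠ 0 := by simp [Real.pi_ne_zero]
  rw [eR, Complex.exp_eq_one_iff]
  constructor
  · rintro ⟨n, hn⟩
    have hx : (x : ℂ) = n := mul_right_cancel₀ h2πi (by rw [← hn]; ring)
    exact ⟨n, by exact_mod_cast hx⟩
  · rintro ⟨n, rfl⟩
    exact ⟨n, by push_cast; ring⟩

lemma eR_mul_div_of_dvd {q a : ℕ} (h : q ∣ a) (x : ℕ) : eR (a * x / q) = 1 := by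
  obtain ⟨c, rfl⟩ := h
  rcases eq_or_ne q 0 with rfl | hq
  · simp [eR]
  · rw [show ((q * c : ℕ) : ℝ) * x / q = ((c * x : ℕ) : ℝ) by push_cast; field_simp, eR_natCast]

lemma sum_Icc_eR_mul_div {q : ℕ} (hq : 0 < q) (m : ℤ) :
    ∑ a ∈ Icc 1 q, eR (a * m / q) = if (q : ℤ) ∣ m then (q : ℂ) else 0 := by
  have hq0 : (q : ℝ) ≠ 0 := by positivity
  set ζ := eR (m / q)
  have hpow (a : ℕ) : eR (a * m / q) = ζ ^ a := by rw [← eR_natCast_mul, mul_div_assoc]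
  have hζq : ζ ^ q = 1 := by rw [← hpow, mul_div_cancel_left₀ _ hq0, eR_intCast]
  simp only [hpow]
  split_ifs with hdvd
  · obtain ⟨k, rfl⟩ := hdvd
    have hζ : ζ = 1 := by
      simp only [ζ]
      push_cast
      rw [mul_div_cancel_left₀ _ hq0, eR_intCast]
    simp [hζ]
  · have hζ : ζ ≠ 1 := by
      rw [Ne, eR_eq_one_iff]
      rintro ⟨n, hn⟩
      rw [div_eq_iff hq0] at hn
      exact hdvd ⟨n, by rw [mul_comm]; exact_mod_cast hn⟩
    rw [← Ico_add_one_right_eq_Icc, sum_Ico_eq_sum_range, add_tsub_cancel_right]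
    simp only [pow_add, pow_one, ← mul_sum, geom_sum_eq hζ, hζq, sub_self, zero_div, mul_zero]

lemma sum_eR_mul_sum_eR {α β : Type*} (s : Finset α) (t : Finset β) (f : α → ℝ) (g : β → ℝ) :
    (∑ x ∈ s, eR (f x)) * ∑ y ∈ t, eR (g y) = ∑ z ∈ s ×ˢ t, eR (f z.1 + g z.2) := by
  simp only [sum_mul_sum, sum_product, eR_add]

lemma sum_Icc_sum_eR_eq_card {ι : Type*} {q : ℕ} (hq : 0 < q) (W : Finset ι) (F : ι → ℤ)
    (N : ℤ) :
    ∑ a ∈ Icc 1 q, ∑ u ∈ W, eR (a * (F u - N : ℤ) / q) = q * #{u ∈ W | F u ≡ N [ZMOD q]} := by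
  have hcongr (u : ι) : F u ≡ N [ZMOD q] ↔ (q : ℤ) ∣ F u - N :=
    Int.modEq_comm.trans Int.modEq_iff_dvd
  rw [sum_comm]
  simp only [sum_Icc_eR_mul_div hq, sum_ite, sum_const, nsmul_eq_mul, hcongr]
  ring

def reducedResidues (q : ℕ) : Finset ℕ := {n ∈ Icc 1 q | n.gcd q = 1}

lemma card_reducedResidues (q : ℕ) : #(reducedResidues q) = q.totient := by
  rw [← Nat.filter_coprime_Ico_eq_totient q 1, add_comm, Ico_add_one_right_eq_Icc]
  exact congrArg card (filter_congr fun n _ => by rw [Nat.gcd_comm])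

lemma mem_reducedResidues_of_prime {p : ℕ} (hp : p.Prime) {n : ℕ} :
    n ∈ reducedResidues p ↔ n ∈ Icc 1 p ∧ ¬ p ∣ n :=
  mem_filter.trans (Iff.and Iff.rfl (Nat.coprime_comm.trans hp.coprime_iff_not_dvd))

lemma reducedResidues_of_prime {p : ℕ} (hp : p.Prime) : reducedResidues p = Icc 1 (p - 1) := by
  ext n
  simp only [mem_reducedResidues_of_prime hp, mem_Icc]
  have := hp.one_lt
  constructor
  · rintro ⟨⟨h1, h2⟩, hn⟩
    exact ⟨h1, Nat.le_sub_one_of_lt (h2.lt_of_ne (by rintro rfl; exact hn dvd_rfl))⟩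
  · rintro ⟨h1, h2⟩
    exact ⟨⟨h1, by omega⟩, Nat.not_dvd_of_pos_of_lt h1 (by omega)⟩

lemma S2_of_dvd {q a : ℕ} (h : q ∣ a) : S2 q a = q := by
  have hterm (n : ℕ) : eR (a * (n : ℝ) ^ 2 / q) = 1 := by exact_mod_cast eR_mul_div_of_dvd h (n ^ 2)
  simp [S2, hterm]

lemma Sstar_of_dvd {q a : ℕ} (k : ℕ) (h : q ∣ a) : Sstar k q a = q.totient := by
  simp only [Sstar, ← Nat.cast_pow, eR_mul_div_of_dvd h, sum_const, nsmul_one]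
  exact congrArg Nat.cast (card_reducedResidues q)

def K6form (b : ℕ) (u : ℕ × ℕ × ℕ × ℕ × ℕ × ℕ) : ℤ :=
  (u.1 : ℤ) ^ 3 + (u.2.1 : ℤ) ^ 3 + (u.2.2.1 : ℤ) ^ 3 + (u.2.2.2.1 : ℤ) ^ 3 +
    (u.2.2.2.2.1 : ℤ) ^ 4 + (u.2.2.2.2.2 : ℤ) ^ b

def L7form (b : ℕ) (u : ℕ × ℕ × ℕ × ℕ × ℕ × ℕ × ℕ) : ℤ := (u.1 : ℤ) ^ 2 + K6form b u.2

lemma K6_eq_card {b p : ℕ} (hp : p.Prime) (N : ℤ) :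
    K6 b p N = #{u ∈ reducedResidues p ×ˢ reducedResidues p ×ˢ reducedResidues p ×ˢ
      reducedResidues p ×ˢ reducedResidues p ×ˢ reducedResidues p | K6form b u ≡ N [ZMOD p]} := by
  rw [K6]
  congr 1
  ext u
  simp only [mem_filter, mem_product, mem_reducedResidues_of_prime hp]
  simp only [K6form]
  tauto

lemma L7_eq_card {b p : ℕ} (hp : p.Prime) (N : ℤ) :
    L7 b p N = #{u ∈ Icc 1 p ×ˢ reducedResidues p ×ˢ reducedResidues p ×ˢ reducedResidues p ×ˢ
      reducedResidues p ×ˢ reducedResidues p ×ˢ reducedResidues p | L7form b u ≡ N [ZMOD p]} := by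
  rw [L7]
  congr 1
  ext u
  simp only [mem_filter, mem_product, mem_reducedResidues_of_prime hp]
  simp only [L7form, K6form, add_assoc]
  tauto

def Bterm (b q : ℕ) (N : ℤ) (a : ℕ) : ℂ :=
  Sstar 3 q a ^ 4 * Sstar 4 q a * Sstar b q a * eR (-((a : ℝ) * (N : ℝ) / q))

lemma Bterm_self (b : ℕ) {q : ℕ} (hq : q ≠ 0) (N : ℤ) : Bterm b q N q = q.totient ^ 6 := by
  have hN : -((q : ℝ) * N / q) = ((-N : ℤ) : ℝ) := by push_cast; field_simp
  rw [Bterm, Sstar_of_dvd _ dvd_rfl, Sstar_of_dvd _ dvd_rfl, Sstar_of_dvd _ dvd_rfl, hN,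
    eR_intCast]
  ring

lemma Bterm_eq_sum (b q : ℕ) (N : ℤ) (a : ℕ) :
    Bterm b q N a = ∑ u ∈ reducedResidues q ×ˢ reducedResidues q ×ˢ reducedResidues q ×ˢ
      reducedResidues q ×ˢ reducedResidues q ×ˢ reducedResidues q,
        eR (a * (K6form b u - N : ℤ) / q) := by
  have hassoc : Bterm b q N a = Sstar 3 q a * (Sstar 3 q a * (Sstar 3 q a * (Sstar 3 q a *
      (Sstar 4 q a * Sstar b q a)))) * eR (-((a : ℝ) * (N : ℝ) / q)) := by
    rw [Bterm]
    ring
  rw [hassoc]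
  simp only [Sstar, sum_eR_mul_sum_eR]
  rw [sum_mul]
  simp only [← eR_add]
  refine sum_congr rfl fun u _ => congrArg eR ?_
  simp only [K6form]
  push_cast
  ring

lemma S2_mul_Bterm_eq_sum (b q : ℕ) (N : ℤ) (a : ℕ) :
    S2 q a * Bterm b q N a = ∑ u ∈ Icc 1 q ×ˢ reducedResidues q ×ˢ reducedResidues q ×ˢ
      reducedResidues q ×ˢ reducedResidues q ×ˢ reducedResidues q ×ˢ reducedResidues q,
        eR (a * (L7form b u - N : ℤ) / q) := by
  rw [Bterm_eq_sum, S2, sum_eR_mul_sum_eR]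
  refine sum_congr rfl fun u _ => congrArg eR ?_
  simp only [L7form]
  push_cast
  ring

lemma sum_Icc_Bterm {b p : ℕ} (hp : p.Prime) (N : ℤ) :
    ∑ a ∈ Icc 1 p, Bterm b p N a = p * K6 b p N := by
  simp only [Bterm_eq_sum]
  rw [sum_Icc_sum_eR_eq_card hp.pos, K6_eq_card hp]

lemma sum_Icc_S2_mul_Bterm {b p : ℕ} (hp : p.Prime) (N : ℤ) :
    ∑ a ∈ Icc 1 p, S2 p a * Bterm b p N a = p * L7 b p N := by
  simp only [S2_mul_Bterm_eq_sum]
  rw [sum_Icc_sum_eR_eq_card hp.pos, L7_eq_card hp]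

lemma sum_Icc_one_sub_one {M : Type*} [AddCommGroup M] {q : ℕ} (hq : q ≠ 0) (f : ℕ → M) :
    ∑ a ∈ Icc 1 (q - 1), f a = ∑ a ∈ Icc 1 q, f a - f q := by
  obtain ⟨q, rfl⟩ := Nat.exists_eq_add_one_of_ne_zero hq
  rw [sum_Icc_succ_top (by omega), add_tsub_cancel_right, add_sub_cancel_right]

lemma Bp_eq {b p : ℕ} (hp : p.Prime) (N : ℤ) :
    Bp b p N = p * (p * K6 b p N - p.totient ^ 6) := by
  have hS2 (a : ℕ) : S2 p (a * p ^ 2) = p :=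
    S2_of_dvd (dvd_mul_of_dvd_right (dvd_pow_self p two_ne_zero) a)
  rw [Bp, sum_congr rfl fun a _ => show _ = p * Bterm b p N a by rw [hS2, Bterm]; ring,
    ← mul_sum, sum_Icc_one_sub_one hp.ne_zero, sum_Icc_Bterm hp, Bterm_self b hp.ne_zero]

lemma B_eq {b p : ℕ} (hp : p.Prime) (N : ℤ) :
    B b p N = p * L7 b p N - p * p.totient ^ 6 := by
  rw [B, ← reducedResidues, reducedResidues_of_prime hp,
    sum_congr rfl fun a _ => show _ = S2 p a * Bterm b p N a by rw [Bterm]; ring,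
    sum_Icc_one_sub_one hp.ne_zero, sum_Icc_S2_mul_Bterm hp, Bterm_self b hp.ne_zero,
    S2_of_dvd dvd_rfl]

lemma natCast_sub_one_ne_zero {p : ℕ} (hp : p.Prime) : (p : ℂ) - 1 ≠ 0 :=
  sub_ne_zero.mpr (by exact_mod_cast hp.one_lt.ne')

lemma one_add_Ap {b p : ℕ} (hp : p.Prime) (N : ℤ) :
    1 + Ap b p N = p * K6 b p N / ((p : ℂ) - 1) ^ 6 := by
  have hp0 : (p : ℂ) ≠ 0 := mod_cast hp.ne_zero
  have hp1 := natCast_sub_one_ne_zero hp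
  rw [Ap, Bp_eq hp, Nat.totient_prime hp, Nat.cast_sub hp.one_le, Nat.cast_one]
  field_simp
  ring

lemma one_add_A {b p : ℕ} (hp : p.Prime) (N : ℤ) :
    1 + A b p N = L7 b p N / ((p : ℂ) - 1) ^ 6 := by
  have hp0 : (p : ℂ) ≠ 0 := mod_cast hp.ne_zero
  have hp1 := natCast_sub_one_ne_zero hp
  rw [A, B_eq hp, Nat.totient_prime hp, Nat.cast_sub hp.one_le, Nat.cast_one]
  field_simp
  ring

theorem stmt17_general (b : ℕ) (p : ℕ) (hp : p.Prime) (N : ℤ) :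
    1 + Ap b p N = (p : ℂ) * (K6 b p N : ℂ) / ((p : ℂ) - 1) ^ 6 ∧
    (0 < L7 b p N →
      (1 + Ap b p N) / (1 + A b p N) = (p : ℂ) * (K6 b p N : ℂ) / (L7 b p N : ℂ)) := by
  refine ⟨one_add_Ap hp N, fun _ => ?_⟩
  rw [one_add_Ap hp, one_add_A hp,
    div_div_div_cancel_right₀ (pow_ne_zero 6 (natCast_sub_one_ne_zero hp))]

theorem stmt17 (b : ℕ) (hb1 : 12 ≤ b) (hb2 : b ≤ 35) (p : ℕ) (hp : p.Prime) (N : ℤ) :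
    1 + Ap b p N = (p : ℂ) * (K6 b p N : ℂ) / ((p : ℂ) - 1) ^ 6 ∧
    (0 < L7 b p N →
      (1 + Ap b p N) / (1 + A b p N) = (p : ℂ) * (K6 b p N : ℂ) / (L7 b p N : ℂ)) :=
  stmt17_general b p hp N

end
end

section
/- Fix an integer b with 12 ≤ b ≤ 35. There is a constant C = C(b) such that for every prime p and every odd positive integer N, the quantity ω(p) = p·𝔎(p,N)/𝔏(p,N) is well defined (𝔏(p,N) > 0) and satisfies 0 ≤ ω(p) < p and |ω(p) − 1| ≤ C/p. -/
open scoped Classical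
open Finset

noncomputable section

/-!
Both counts live in `ZMod p`: `𝔏` counts solutions of `x² + u₁³ + ⋯ + u₆^b = N` with `x`
arbitrary and every `uⱼ ≠ 0`, and `𝔎` the solutions with `x = 0`, so `𝔏 = 𝔎 + 𝔏*`. Every
residue is already a nonzero square plus four nonzero cubes (Cauchy–Davenport for `p ≥ 5`, by
hand for `p = 2, 3`, where `p = 2` needs `N` odd), so `𝔏* > 0` and `0 ≤ ω < p`.

By orthogonality of additive characters, `p` times a count is a sum over `c ∈ 𝔽_p` of products
of one-variable exponential sums; `c = 0` gives the main term `(p - 1)⁶` (times `p` for `𝔏`),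
and for `c ≠ 0` every sum `∑_{u ≠ 0} ψ(c uᵏ)` is at most `k √p`. Hence `p 𝔎` and `𝔏` are both
`(p - 1)⁶ + O(b p⁴)`, and `|ω - 1| = O(b / p)`.
-/

lemma AddChar.map_sum_eq_prod {A M ι : Type*} [AddCommMonoid A] [CommMonoid M]
    (ψ : AddChar A M) (s : Finset ι) (f : ι → A) : ψ (∑ i ∈ s, f i) = ∏ i ∈ s, ψ (f i) := by
  induction s using Finset.induction_on with
  | empty => simp
  | insert a s ha ih => rw [sum_insert ha, prod_insert ha, AddChar.map_add_eq_mul, ih]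

namespace Waring

section CharacterSums

variable {R : Type*} [CommRing R] [Fintype R] [DecidableEq R] {ψ : AddChar R ℂ}

theorem card_mul_card_filter_sum_eq (hψ : ψ.IsPrimitive) {ι : Type*} [Fintype ι]
    [DecidableEq ι] (A : ι → Finset R) (f : ι → R → R) (M : R) :
    (Fintype.card R : ℂ) * #{u ∈ Fintype.piFinset A | ∑ i, f i (u i) = M} =
      ∑ c, ψ (-(c * M)) * ∏ i, ∑ x ∈ A i, ψ (c * f i x) := by
  have hexpand (c : R) : ψ (-(c * M)) * ∏ i, ∑ x ∈ A i, ψ (c * f i x) =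
      ∑ u ∈ Fintype.piFinset A, ψ (c * (∑ i, f i (u i) - M)) := by
    rw [prod_univ_sum, mul_sum]
    refine sum_congr rfl fun u _ => ?_
    rw [← AddChar.map_sum_eq_prod, ← AddChar.map_add_eq_mul, mul_sub, mul_sum, neg_add_eq_sub]
  simp_rw [hexpand]
  rw [sum_comm]
  simp_rw [AddChar.sum_mulShift _ hψ, sub_eq_zero]
  rw [← Nat.cast_sum, sum_ite, sum_const_zero, add_zero, sum_const, smul_eq_mul, mul_comm,
    Nat.cast_mul]

theorem norm_card_mul_card_filter_sum_sub_prod_le (hψ : ψ.IsPrimitive) {ι : Type*}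
    [Fintype ι] [DecidableEq ι] (A : ι → Finset R) (f : ι → R → R) (M : R) (B : ι → ℝ)
    (hB : ∀ i, ∀ c ≠ 0, ‖∑ x ∈ A i, ψ (c * f i x)‖ ≤ B i) :
    ‖(Fintype.card R : ℂ) * #{u ∈ Fintype.piFinset A | ∑ i, f i (u i) = M} -
        ∏ i, (#(A i) : ℂ)‖ ≤ (Fintype.card R - 1) * ∏ i, B i := by
  rw [card_mul_card_filter_sum_eq hψ, ← add_sum_erase _ _ (mem_univ 0)]
  simp only [zero_mul, neg_zero, AddChar.map_zero_eq_one, sum_const, nsmul_eq_mul, mul_one,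
    one_mul, add_sub_cancel_left]
  calc _ ≤ ∑ c ∈ univ.erase 0, ‖ψ (-(c * M)) * ∏ i, ∑ x ∈ A i, ψ (c * f i x)‖ :=
        norm_sum_le _ _
    _ ≤ ∑ c ∈ univ.erase (0 : R), ∏ i, B i := by
        refine sum_le_sum fun c hc => ?_
        rw [norm_mul, AddChar.norm_apply, one_mul, norm_prod]
        exact prod_le_prod (fun _ _ => norm_nonneg _) fun i _ => hB i c (ne_of_mem_erase hc)
    _ = (Fintype.card R - 1) * ∏ i, B i := by
        rw [sum_const, card_erase_of_mem (mem_univ _), card_univ, nsmul_eq_mul,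
          Nat.cast_sub Fintype.card_pos, Nat.cast_one]

end CharacterSums

lemma sum_comp_le_mul_sum {α β : Type*} [Fintype β] [DecidableEq β] (s : Finset α) (φ : α → β)
    (g : β → ℝ) (hg : ∀ b, 0 ≤ g b) (k : ℕ) (hφ : ∀ b, #{a ∈ s | φ a = b} ≤ k) :
    ∑ a ∈ s, g (φ a) ≤ k * ∑ b, g b := by
  rw [sum_comp, mul_sum]
  calc ∑ b ∈ s.image φ, #{a ∈ s | φ a = b} • g b ≤ ∑ b ∈ s.image φ, k * g b :=
        sum_le_sum fun b _ => by rw [nsmul_eq_mul]; gcongr; exacts [hg b, hφ b]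
    _ ≤ ∑ b, k * g b := sum_le_sum_of_subset_of_nonneg (subset_univ _)
        fun b _ _ => mul_nonneg k.cast_nonneg (hg b)

lemma card_filter_pow_eq_le {R : Type*} [CommRing R] [IsDomain R] [DecidableEq R] {k : ℕ}
    (hk : k ≠ 0) (s : Finset R) (a : R) : #{x ∈ s | x ^ k = a} ≤ k := by
  calc #{x ∈ s | x ^ k = a} ≤ #(Polynomial.nthRootsFinset k a) :=
        card_le_card fun x hx => by
          rw [Polynomial.mem_nthRootsFinset (Nat.pos_of_ne_zero hk)]; exact (mem_filter.1 hx).2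
    _ ≤ Multiset.card (Polynomial.nthRoots k a) := by
        rw [Polynomial.nthRootsFinset_def]; exact Multiset.toFinset_card_le _
    _ ≤ k := Polynomial.card_nthRoots k a

section PowerSums

variable {F : Type*} [Field F] [Fintype F] [DecidableEq F] {ψ : AddChar F ℂ}

lemma card_sub_one_le_mul_card_image_pow {k : ℕ} (hk : k ≠ 0) :
    Fintype.card F - 1 ≤ k * #((univ.erase (0 : F)).image (· ^ k)) := by
  rw [← card_univ, ← card_erase_of_mem (mem_univ 0)]
  exact card_le_mul_card_image _ _ fun a _ => card_filter_pow_eq_le hk _ _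

variable (ψ) in
def powerSum (k : ℕ) (c : F) : ℂ := ∑ u ∈ univ.erase 0, ψ (c * u ^ k)

lemma powerSum_mul_pow (k : ℕ) (c : F) {t : F} (ht : t ≠ 0) :
    powerSum ψ k (c * t ^ k) = powerSum ψ k c := by
  refine sum_nbij' (t * ·) (t⁻¹ * ·) ?_ ?_ ?_ ?_ ?_ <;> simp [ht, mul_pow, mul_assoc]

lemma sum_norm_sq_powerSum (hψ : ψ.IsPrimitive) (k : ℕ) :
    ∑ c, ‖powerSum ψ k c‖ ^ 2 =
      Fintype.card F * ∑ u ∈ univ.erase (0 : F), #{v ∈ univ.erase 0 | u ^ k = v ^ k} := by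
  apply Complex.ofReal_injective
  push_cast
  simp_rw [← Complex.mul_conj', powerSum, map_sum, ← AddChar.map_neg_eq_conj, sum_mul_sum,
    ← AddChar.map_add_eq_mul, ← mul_neg, ← mul_add]
  rw [sum_comm]
  simp_rw [mul_sum]
  refine sum_congr rfl fun u _ => ?_
  rw [sum_comm]
  simp_rw [AddChar.sum_mulShift _ hψ, add_neg_eq_zero]
  rw [← Nat.cast_sum, sum_ite, sum_const_zero, add_zero, sum_const, smul_eq_mul, mul_comm,
    Nat.cast_mul]

lemma sum_norm_sq_powerSum_le (hψ : ψ.IsPrimitive) {k : ℕ} (hk : k ≠ 0) :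
    ∑ c, ‖powerSum ψ k c‖ ^ 2 ≤ Fintype.card F * ((Fintype.card F - 1) * k) := by
  rw [sum_norm_sq_powerSum hψ]
  push_cast
  gcongr
  calc (∑ u ∈ univ.erase (0 : F), #{v ∈ univ.erase 0 | u ^ k = v ^ k} : ℝ)
      ≤ ∑ u ∈ univ.erase (0 : F), (k : ℝ) := by
        gcongr with u
        simp_rw [eq_comm (a := u ^ k)]
        exact Nat.cast_le.mpr (card_filter_pow_eq_le hk _ _)
    _ = (Fintype.card F - 1) * k := by
        rw [sum_const, card_erase_of_mem (mem_univ _), card_univ, nsmul_eq_mul,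
          Nat.cast_sub Fintype.card_pos, Nat.cast_one]

theorem norm_powerSum_le (hψ : ψ.IsPrimitive) {k : ℕ} (hk : k ≠ 0) {c : F} (hc : c ≠ 0) :
    ‖powerSum ψ k c‖ ≤ k * √(Fintype.card F) := by
  have hq : (1 : ℝ) < Fintype.card F := by exact_mod_cast Fintype.one_lt_card
  -- `powerSum ψ k` is constant on `c • (Fˣ) ^ k`, which `t ↦ c * t ^ k` covers at most
  -- `k`-to-one; Parseval then bounds the whole coset.
  have horbit : (Fintype.card F - 1) * ‖powerSum ψ k c‖ ^ 2 ≤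
      k * (Fintype.card F * ((Fintype.card F - 1) * k)) :=
    calc (Fintype.card F - 1) * ‖powerSum ψ k c‖ ^ 2
        = ∑ t ∈ univ.erase (0 : F), ‖powerSum ψ k (c * t ^ k)‖ ^ 2 := by
          rw [sum_congr rfl fun t ht => by rw [powerSum_mul_pow k c (ne_of_mem_erase ht)],
            sum_const, card_erase_of_mem (mem_univ _), card_univ, nsmul_eq_mul,
            Nat.cast_sub Fintype.card_pos, Nat.cast_one]
      _ ≤ k * ∑ d, ‖powerSum ψ k d‖ ^ 2 :=
          sum_comp_le_mul_sum (univ.erase 0) (fun t => c * t ^ k) (‖powerSum ψ k ·‖ ^ 2)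
            (fun _ => by positivity) k fun d => by
            simp_rw [← eq_inv_mul_iff_mul_eq₀ hc]
            exact card_filter_pow_eq_le hk _ _
      _ ≤ k * (Fintype.card F * ((Fintype.card F - 1) * k)) := by
          gcongr; exact sum_norm_sq_powerSum_le hψ hk
  have hsq : ‖powerSum ψ k c‖ ^ 2 ≤ (k * √(Fintype.card F)) ^ 2 := by
    rw [mul_pow, Real.sq_sqrt (by positivity)]
    nlinarith
  exact (sq_le_sq₀ (norm_nonneg _) (by positivity)).1 hsq

end PowerSums

section SolutionCount

variable {F : Type*} [CommRing F] [Fintype F] [DecidableEq F]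

/-- Coordinate `0` is the squared variable `x`, ranging over `A₀`: `A₀ = univ` gives `𝔏`,
`A₀ = {0}` gives `𝔎` and `A₀ = univ.erase 0` gives `𝔏*`. -/
def solutionCount (A₀ : Finset F) (b : ℕ) (M : F) : ℕ :=
  #{u ∈ Fintype.piFinset (Fin.cons A₀ fun _ => univ.erase 0) |
    ∑ i, u i ^ (![2, 3, 3, 3, 3, 4, b] : Fin 7 → ℕ) i = M}

theorem solutionCount_union {A B : Finset F} (h : Disjoint A B) (b : ℕ) (M : F) :
    solutionCount (A ∪ B) b M = solutionCount A b M + solutionCount B b M := by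
  unfold solutionCount
  rw [← card_union_of_disjoint (disjoint_filter_filter ?_), ← filter_union]
  · congr 1
    ext u
    simp [Fintype.mem_piFinset, Fin.forall_fin_succ, or_and_right]
  · refine disjoint_left.2 fun u hA hB => ?_
    exact disjoint_left.1 h (by simpa using Fintype.mem_piFinset.1 hA 0)
      (by simpa using Fintype.mem_piFinset.1 hB 0)

end SolutionCount

section SolutionCountEstimates

variable {F : Type*} [Field F] [Fintype F] [DecidableEq F] {ψ : AddChar F ℂ}

theorem norm_card_mul_solutionCount_sub_le (hψ : ψ.IsPrimitive) (A₀ : Finset F) {B₀ : ℝ}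
    (hA₀ : ∀ c ≠ 0, ‖∑ x ∈ A₀, ψ (c * x ^ 2)‖ ≤ B₀) {b : ℕ} (hb : b ≠ 0) (M : F) :
    ‖(Fintype.card F : ℂ) * solutionCount A₀ b M - #A₀ * (Fintype.card F - 1) ^ 6‖ ≤
      (Fintype.card F - 1) * (B₀ * (324 * b * Fintype.card F ^ 3)) := by
  set e : Fin 7 → ℕ := ![2, 3, 3, 3, 3, 4, b]
  have h := norm_card_mul_card_filter_sum_sub_prod_le hψ (Fin.cons A₀ fun _ => univ.erase 0)
    (fun i x => x ^ e i) M (Fin.cons B₀ fun j => e j.succ * √(Fintype.card F)) (fun i c hc => by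
      induction i using Fin.cases with
      | zero => exact hA₀ c hc
      | succ j =>
        rw [Fin.cons_succ, Fin.cons_succ]
        exact norm_powerSum_le hψ (by fin_cases j <;> simp [e, hb]) hc)
  have hs : √(Fintype.card F : ℝ) ^ 6 = Fintype.card F ^ 3 := by
    rw [show 6 = 2 * 3 by rfl, pow_mul, Real.sq_sqrt (Nat.cast_nonneg _)]
  have hcard : ∏ i, (#((Fin.cons A₀ fun _ => univ.erase 0 : Fin 7 → Finset F) i) : ℂ) =
      #A₀ * (Fintype.card F - 1) ^ 6 := by
    simp [Fin.prod_univ_succ, card_erase_of_mem, Nat.cast_sub Fintype.card_pos]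
  rw [hcard] at h
  refine h.trans_eq ?_
  rw [Fin.prod_cons, Fin.prod_univ_six, ← hs]
  simp only [e, Fin.succ_zero_eq_one, Fin.succ_one_eq_two, Matrix.cons_val]
  push_cast
  ring

theorem abs_card_mul_solutionCount_zero_sub_le (hψ : ψ.IsPrimitive) {b : ℕ} (hb : b ≠ 0)
    (M : F) :
    |(Fintype.card F : ℝ) * solutionCount {0} b M - (Fintype.card F - 1) ^ 6| ≤
      324 * (b : ℝ) * (Fintype.card F : ℝ) ^ 4 := by
  have h := norm_card_mul_solutionCount_sub_le hψ {0} (B₀ := 1) (fun c _ => by simp) hb M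
  rw [card_singleton, Nat.cast_one, one_mul, one_mul] at h
  rw [← Real.norm_eq_abs, ← Complex.norm_real]
  push_cast
  refine h.trans ?_
  set q : ℝ := (Fintype.card F : ℝ)
  calc (q - 1) * (324 * b * q ^ 3) ≤ q * (324 * b * q ^ 3) := by gcongr; linarith
    _ = 324 * b * q ^ 4 := by ring

theorem abs_solutionCount_univ_sub_le (hψ : ψ.IsPrimitive) {b : ℕ} (hb : b ≠ 0) (M : F) :
    |(solutionCount univ b M : ℝ) - (Fintype.card F - 1) ^ 6| ≤
      3 * (324 * (b : ℝ)) * (Fintype.card F : ℝ) ^ 4 := by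
  have hq : (1 : ℝ) ≤ Fintype.card F := Nat.one_le_cast.mpr Fintype.card_pos
  have hs : 1 ≤ √(Fintype.card F : ℝ) := Real.one_le_sqrt.mpr hq
  have h := norm_card_mul_solutionCount_sub_le hψ univ (B₀ := 3 * √(Fintype.card F : ℝ))
    (fun c hc => by
      rw [← add_sum_erase _ _ (mem_univ 0), zero_pow two_ne_zero, mul_zero,
        AddChar.map_zero_eq_one]
      change ‖1 + powerSum ψ 2 c‖ ≤ _
      have := norm_powerSum_le hψ two_ne_zero hc
      push_cast at this
      linarith [norm_add_le 1 (powerSum ψ 2 c), norm_one (α := ℂ)]) hb M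
  have hre : ‖(Fintype.card F : ℂ) * solutionCount univ b M -
      #(univ : Finset F) * (Fintype.card F - 1) ^ 6‖ =
      Fintype.card F * |(solutionCount univ b M : ℝ) - (Fintype.card F - 1) ^ 6| := by
    rw [card_univ, ← mul_sub, norm_mul, Complex.norm_natCast, ← Real.norm_eq_abs,
      ← Complex.norm_real]
    push_cast
    rfl
  rw [hre] at h
  have hsq : √(Fintype.card F : ℝ) ≤ Fintype.card F :=
    (Real.sqrt_le_left (by linarith)).2 (by nlinarith)
  generalize (Fintype.card F : ℝ) = q at h hq hs hsq ⊢
  refine le_of_mul_le_mul_left (h.trans ?_) (by linarith : (0 : ℝ) < q)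
  calc (q - 1) * (3 * √q * (324 * b * q ^ 3)) ≤ q * (3 * q * (324 * b * q ^ 3)) := by
        gcongr; linarith
    _ = q * (3 * (324 * b) * q ^ 4) := by ring

end SolutionCountEstimates

theorem abs_mul_div_sub_one_le {P K L a : ℝ} (hP : 2 ≤ P) (ha : 0 ≤ a) (hK : 0 ≤ K)
    (hKL : K < L) (hK' : |P * K - (P - 1) ^ 6| ≤ a * P ^ 4)
    (hL' : |L - (P - 1) ^ 6| ≤ 3 * a * P ^ 4) :
    |P * K / L - 1| ≤ 512 * a / P := by
  have hL : 0 < L := hK.trans_lt hKL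
  rw [div_sub_one hL.ne', abs_div, abs_of_pos hL, div_le_div_iff₀ hL (by linarith)]
  -- Either `(P - 1) ^ 6` dominates both errors and `L ≥ P ^ 6 / 128`, or `P ^ 2 ≤ 384 a` and
  -- the trivial bound `|P K - L| ≤ P L` suffices.
  have hX : P ^ 6 / 64 ≤ (P - 1) ^ 6 := by
    calc P ^ 6 / 64 = (P / 2) ^ 6 := by ring
      _ ≤ (P - 1) ^ 6 := by gcongr; linarith
  rcases le_or_gt (6 * a * P ^ 4) ((P - 1) ^ 6) with hbig | hsmall
  · have hLbig : P ^ 6 / 128 ≤ L := by linarith [(abs_le.1 hL').1]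
    have hdiff : |P * K - L| ≤ 4 * a * P ^ 4 := by
      calc |P * K - L| ≤ |P * K - (P - 1) ^ 6| + |(P - 1) ^ 6 - L| := abs_sub_le _ _ _
        _ ≤ 4 * a * P ^ 4 := by rw [abs_sub_comm _ L]; linarith
    calc |P * K - L| * P ≤ 4 * a * P ^ 4 * P := by gcongr
      _ ≤ 4 * a * P ^ 4 * P ^ 2 := by gcongr; nlinarith
      _ = 512 * a * (P ^ 6 / 128) := by ring
      _ ≤ 512 * a * L := by gcongr
  · have hP2 : P ^ 2 ≤ 384 * a := by
      have : P ^ 4 * P ^ 2 ≤ P ^ 4 * (384 * a) := by nlinarith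
      exact le_of_mul_le_mul_left this (by positivity)
    have hdiff : |P * K - L| ≤ P * L := by
      rw [abs_le]; constructor <;> nlinarith
    calc |P * K - L| * P ≤ P * L * P := by gcongr
      _ = P ^ 2 * L := by ring
      _ ≤ 384 * a * L := by gcongr
      _ ≤ 512 * a * L := by gcongr; norm_num

section Representatives

variable {p : ℕ}

def iccRepr (z : ZMod p) : ℕ := if z = 0 then p else z.val

lemma iccRepr_mem_Icc [NeZero p] (z : ZMod p) : iccRepr z ∈ Icc 1 p := by
  unfold iccRepr
  split_ifs with h
  · exact mem_Icc.2 ⟨NeZero.one_le, le_rfl⟩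
  · exact mem_Icc.2 ⟨Nat.one_le_iff_ne_zero.2 ((ZMod.val_ne_zero z).2 h), (ZMod.val_lt z).le⟩

@[simp]
lemma natCast_iccRepr [NeZero p] (z : ZMod p) : (iccRepr z : ZMod p) = z := by
  unfold iccRepr
  split_ifs with h
  · rw [h, ZMod.natCast_self]
  · exact ZMod.natCast_zmod_val z

lemma iccRepr_natCast {a : ℕ} (ha : a ∈ Icc 1 p) : iccRepr (a : ZMod p) = a := by
  rw [mem_Icc] at ha
  unfold iccRepr
  split_ifs with h
  · exact (Nat.eq_of_dvd_of_lt_two_mul (by omega) ((ZMod.natCast_eq_zero_iff _ _).1 h)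
      (by omega)).symm
  · rw [ZMod.val_natCast, Nat.mod_eq_of_lt (lt_of_le_of_ne ha.2 fun hap => h (by simp [hap]))]

theorem L7_eq_solutionCount (b : ℕ) [NeZero p] (N : ℤ) :
    L7 b p N = solutionCount univ b (N : ZMod p) := by
  refine card_nbij' (fun u => ![(u.1 : ZMod p), u.2.1, u.2.2.1, u.2.2.2.1, u.2.2.2.2.1,
      u.2.2.2.2.2.1, u.2.2.2.2.2.2])
    (fun z => (iccRepr (z 0), iccRepr (z 1), iccRepr (z 2), iccRepr (z 3), iccRepr (z 4),
      iccRepr (z 5), iccRepr (z 6))) ?_ ?_ ?_ ?_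
  · rintro ⟨x, u₁, u₂, u₃, u₄, u₅, u₆⟩ hu
    simp only [coe_filter, Set.mem_ofPred_eq, mem_product, ← ZMod.natCast_eq_zero_iff,
      ← ZMod.intCast_eq_intCast_iff] at hu
    push_cast at hu
    simp [Fintype.mem_piFinset, Fin.forall_fin_succ, Fin.sum_univ_succ, hu, ← add_assoc]
  · intro z hz
    simp only [coe_filter, Set.mem_ofPred_eq, mem_product, ← ZMod.natCast_eq_zero_iff,
      ← ZMod.intCast_eq_intCast_iff, iccRepr_mem_Icc]
    push_cast
    simpa [Fintype.mem_piFinset, Fin.forall_fin_succ, Fin.sum_univ_succ, ← add_assoc,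
      and_assoc] using hz
  · rintro ⟨x, u₁, u₂, u₃, u₄, u₅, u₆⟩ hu
    simp only [coe_filter, Set.mem_ofPred_eq, mem_product] at hu
    simp [iccRepr_natCast, hu]
  · intro z _
    ext i
    fin_cases i <;> simp

theorem K6_eq_solutionCount (b : ℕ) [NeZero p] (N : ℤ) :
    K6 b p N = solutionCount {0} b (N : ZMod p) := by
  refine card_nbij' (fun u => ![0, (u.1 : ZMod p), u.2.1, u.2.2.1, u.2.2.2.1, u.2.2.2.2.1,
      u.2.2.2.2.2])
    (fun z => (iccRepr (z 1), iccRepr (z 2), iccRepr (z 3), iccRepr (z 4), iccRepr (z 5),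
      iccRepr (z 6))) ?_ ?_ ?_ ?_
  · rintro ⟨u₁, u₂, u₃, u₄, u₅, u₆⟩ hu
    simp only [coe_filter, Set.mem_ofPred_eq, mem_product, ← ZMod.natCast_eq_zero_iff,
      ← ZMod.intCast_eq_intCast_iff] at hu
    push_cast at hu
    simp [Fintype.mem_piFinset, Fin.forall_fin_succ, Fin.sum_univ_succ, hu, ← add_assoc]
  · intro z hz
    have h0 : z 0 = 0 := by simpa using Fintype.mem_piFinset.1 (mem_filter.1 hz).1 0
    simp only [coe_filter, Set.mem_ofPred_eq, mem_product, ← ZMod.natCast_eq_zero_iff,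
      ← ZMod.intCast_eq_intCast_iff, iccRepr_mem_Icc]
    push_cast
    simpa [Fintype.mem_piFinset, Fin.forall_fin_succ, Fin.sum_univ_succ, ← add_assoc,
      and_assoc, h0] using hz
  · rintro ⟨u₁, u₂, u₃, u₄, u₅, u₆⟩ hu
    simp only [coe_filter, Set.mem_ofPred_eq, mem_product] at hu
    simp [iccRepr_natCast, hu]
  · intro z hz
    have h0 : z 0 = 0 := by simpa using Fintype.mem_piFinset.1 (mem_filter.1 hz).1 0
    ext i
    fin_cases i <;> simp [h0]

end Representatives

section SumsOfPowers

open scoped Pointwise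

variable {p : ℕ} [Fact p.Prime]

theorem exists_sq_add_four_cubes (hp : 5 ≤ p) (M : ZMod p) :
    ∃ x a b c d : ZMod p, x ≠ 0 ∧ a ≠ 0 ∧ b ≠ 0 ∧ c ≠ 0 ∧ d ≠ 0 ∧
      x ^ 2 + a ^ 3 + b ^ 3 + c ^ 3 + d ^ 3 = M := by
  set S := (univ.erase (0 : ZMod p)).image (· ^ 2)
  set T := (univ.erase (0 : ZMod p)).image (· ^ 3)
  have hS : S.Nonempty := ⟨1, mem_image.2 ⟨1, by simp, one_pow 2⟩⟩
  have hT : T.Nonempty := ⟨1, mem_image.2 ⟨1, by simp, one_pow 3⟩⟩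
  have hS2 := card_sub_one_le_mul_card_image_pow (F := ZMod p) two_ne_zero
  have hT3 := card_sub_one_le_mul_card_image_pow (F := ZMod p) three_ne_zero
  rw [ZMod.card] at hS2 hT3
  change _ ≤ 2 * #S at hS2
  change _ ≤ 3 * #T at hT3
  have hp' := Fact.out (p := p.Prime)
  -- `#(S + T + T + T + T) ≥ min p (#S + 4 #T - 4)`, which is `p` once `p ≥ 5`.
  have c₁ := ZMod.cauchy_davenport hp' hS hT
  have c₂ := ZMod.cauchy_davenport hp' (hS.add hT) hT
  have c₃ := ZMod.cauchy_davenport hp' ((hS.add hT).add hT) hT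
  have c₄ := ZMod.cauchy_davenport hp' (((hS.add hT).add hT).add hT) hT
  have hle : #(S + T + T + T + T) ≤ p := (card_le_univ _).trans_eq (ZMod.card p)
  have huniv : S + T + T + T + T = univ :=
    eq_univ_of_card _ (by rw [ZMod.card]; omega)
  obtain ⟨_, h₄, d3, hd, rfl⟩ := mem_add.1 (huniv ▸ mem_univ M)
  obtain ⟨_, h₃, c3, hc, rfl⟩ := mem_add.1 h₄
  obtain ⟨_, h₂, b3, hb, rfl⟩ := mem_add.1 h₃
  obtain ⟨x2, hx, a3, ha, rfl⟩ := mem_add.1 h₂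
  obtain ⟨x, hx0, rfl⟩ := mem_image.1 hx
  obtain ⟨a, ha0, rfl⟩ := mem_image.1 ha
  obtain ⟨b, hb0, rfl⟩ := mem_image.1 hb
  obtain ⟨c, hc0, rfl⟩ := mem_image.1 hc
  obtain ⟨d, hd0, rfl⟩ := mem_image.1 hd
  exact ⟨x, a, b, c, d, ne_of_mem_erase hx0, ne_of_mem_erase ha0, ne_of_mem_erase hb0,
    ne_of_mem_erase hc0, ne_of_mem_erase hd0, rfl⟩

lemma exists_sq_add_four_cubes_three : ∀ M : ZMod 3, ∃ x a b c d : ZMod 3, x ≠ 0 ∧ a ≠ 0 ∧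
    b ≠ 0 ∧ c ≠ 0 ∧ d ≠ 0 ∧ x ^ 2 + a ^ 3 + b ^ 3 + c ^ 3 + d ^ 3 + 1 + 1 = M := by
  decide

theorem solutionCount_erase_zero_pos (b : ℕ) {M : ZMod p} (hM : p = 2 → M = 1) :
    0 < solutionCount (univ.erase 0) b M := by
  have hp := Fact.out (p := p.Prime)
  obtain ⟨x, a, b', c, d, hx, ha, hb, hc, hd, hsum⟩ : ∃ x a b c d : ZMod p, x ≠ 0 ∧ a ≠ 0 ∧
      b ≠ 0 ∧ c ≠ 0 ∧ d ≠ 0 ∧ x ^ 2 + a ^ 3 + b ^ 3 + c ^ 3 + d ^ 3 + 1 + 1 = M := by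
    rcases eq_or_ne p 2 with rfl | hp2
    · rw [hM rfl]
      exact ⟨1, 1, 1, 1, 1, one_ne_zero, one_ne_zero, one_ne_zero, one_ne_zero, one_ne_zero,
        rfl⟩
    rcases eq_or_ne p 3 with rfl | hp3
    · exact exists_sq_add_four_cubes_three M
    have hp4 : p ≠ 4 := by rintro rfl; norm_num at hp
    obtain ⟨x, a, b, c, d, h⟩ := exists_sq_add_four_cubes (by have := hp.two_le; omega) (M - 2)
    exact ⟨x, a, b, c, d, h.1, h.2.1, h.2.2.1, h.2.2.2.1, h.2.2.2.2.1, by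
      linear_combination h.2.2.2.2.2⟩
  refine card_pos.2 ⟨![x, a, b', c, d, 1, 1], ?_⟩
  simpa [Fintype.mem_piFinset, Fin.forall_fin_succ, Fin.sum_univ_succ, ← add_assoc, hx, ha, hb,
    hc, hd] using hsum

end SumsOfPowers

end Waring

open Waring

theorem stmt18_general (b : ℕ) (hb1 : 12 ≤ b) :
    ∃ C : ℝ, 0 < C ∧ ∀ p : ℕ, p.Prime → ∀ N : ℤ, 0 < N → Odd N →
      0 < L7 b p N ∧
      0 ≤ (p : ℝ) * (K6 b p N : ℝ) / (L7 b p N : ℝ) ∧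
      (p : ℝ) * (K6 b p N : ℝ) / (L7 b p N : ℝ) < p ∧
      |(p : ℝ) * (K6 b p N : ℝ) / (L7 b p N : ℝ) - 1| ≤ C / p := by
  have hb : b ≠ 0 := by omega
  refine ⟨512 * (324 * b), by positivity, fun p hp N _ hN => ?_⟩
  have := Fact.mk hp
  have hψ := ZMod.isPrimitive_stdAddChar p
  have hKL : K6 b p N < L7 b p N := by
    rw [K6_eq_solutionCount, L7_eq_solutionCount, ← insert_erase (mem_univ 0), insert_eq,
      solutionCount_union (by simp)]
    refine Nat.lt_add_of_pos_right (solutionCount_erase_zero_pos b fun hp2 => ?_)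
    subst hp2
    exact ZMod.intCast_eq_one_iff_odd.2 hN
  have hp2 : (2 : ℝ) ≤ p := by exact_mod_cast hp.two_le
  have hL : (0 : ℝ) < L7 b p N := by exact_mod_cast (Nat.zero_le _).trans_lt hKL
  refine ⟨by omega, by positivity, ?_, ?_⟩
  · rw [div_lt_iff₀ hL]
    gcongr
  · rw [K6_eq_solutionCount, L7_eq_solutionCount] at hKL ⊢
    exact abs_mul_div_sub_one_le hp2 (by positivity) (Nat.cast_nonneg _) (by exact_mod_cast hKL)
      (by simpa [ZMod.card] using abs_card_mul_solutionCount_zero_sub_le hψ hb _)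
      (by simpa [ZMod.card] using abs_solutionCount_univ_sub_le hψ hb _)

theorem stmt18 (b : ℕ) (hb1 : 12 ≤ b) (hb2 : b ≤ 35) :
    ∃ C : ℝ, 0 < C ∧ ∀ p : ℕ, p.Prime → ∀ N : ℤ, 0 < N → Odd N →
      0 < L7 b p N ∧
      0 ≤ (p : ℝ) * (K6 b p N : ℝ) / (L7 b p N : ℝ) ∧
      (p : ℝ) * (K6 b p N : ℝ) / (L7 b p N : ℝ) < p ∧
      |(p : ℝ) * (K6 b p N : ℝ) / (L7 b p N : ℝ) - 1| ≤ C / p :=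
  stmt18_general b hb1

end
end
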